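/- For the family P(x;θ) = π^{−n} ∏_{i=1}^n sech(xⁱ − hⁱ(θ)√2) on ℝⁿ with h ∈ C¹(M, ℝⁿ), each factor is a normalized probability density and the Fisher information metric is g_{ab}(θ) = Σ_{i=1}^n ∂_a hⁱ(θ) ∂_b hⁱ(θ). -/

import Mathlib

open MeasureTheory Real Filter


lemma cosh_lower (t : ℝ) : 1 + t ^ 2 / 2 ≤ Real.cosh t := by
  have h2 : Real.cosh t = 2 * Real.sinh (t/2) ^ 2 + 1 := by
    have := Real.cosh_two_mul (t/2)
    have hsq := Real.cosh_sq (t/2)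
    rw [show 2 * (t/2) = t by ring] at this
    rw [this, hsq]; ring
  have hs : |t/2| ≤ |Real.sinh (t/2)| := by
    rcases lt_trichotomy (t/2) 0 with h | h | h
    · have := Real.self_lt_sinh_iff (x := -(t/2)) |>.2 (by linarith)
      rw [Real.sinh_neg] at this
      rw [abs_of_neg h, abs_of_neg (by linarith : Real.sinh (t/2) < 0)]
      linarith
    · simp [h]
    · have := Real.self_lt_sinh_iff.2 h
      rw [abs_of_pos h, abs_of_pos (lt_trans h this)]
      linarith
  have hsq : (t/2)^2 ≤ Real.sinh (t/2) ^ 2 := by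
    rw [← sq_abs (t/2), ← sq_abs (Real.sinh (t/2))]
    exact pow_le_pow_left₀ (abs_nonneg _) hs 2
  rw [h2]; nlinarith

lemma integrable_sech : Integrable (fun t : ℝ => (Real.cosh t)⁻¹) := by
  have h1 : Integrable (fun t : ℝ => 2 * (1 + t^2)⁻¹) :=
    integrable_inv_one_add_sq.const_mul 2
  refine h1.mono ((Real.continuous_cosh.inv₀ (fun t => (Real.cosh_pos t).ne')).aestronglyMeasurable) ?_
  refine ae_of_all _ fun t => ?_
  have hc := Real.cosh_pos t
  have hl : (1 + t^2)/2 ≤ Real.cosh t := le_trans (by nlinarith) (cosh_lower t)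
  have h0 : (0:ℝ) < 1 + t^2 := by positivity
  rw [Real.norm_eq_abs, Real.norm_eq_abs, abs_of_pos (inv_pos.2 hc),
    abs_of_pos (by positivity : (0:ℝ) < 2 * (1 + t^2)⁻¹)]
  rw [inv_le_comm₀ hc (by positivity)]
  rw [show (2 * (1 + t^2)⁻¹)⁻¹ = (1 + t^2)/2 by field_simp]
  exact hl


lemma tendsto_sinh_top : Tendsto Real.sinh atTop atTop := by
  refine tendsto_atTop_mono' _ ?_ tendsto_id
  filter_upwards [eventually_gt_atTop 0] with x hx
  exact (Real.self_lt_sinh_iff.2 hx).le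

lemma tendsto_sinh_bot : Tendsto Real.sinh atBot atBot := by
  refine tendsto_atBot_mono' _ ?_ tendsto_id
  filter_upwards [eventually_lt_atBot 0] with x hx
  have := Real.self_lt_sinh_iff.2 (show (0:ℝ) < -x by linarith)
  rw [Real.sinh_neg] at this
  show Real.sinh x ≤ x
  linarith

lemma tendsto_cosh_top : Tendsto Real.cosh atTop atTop :=
  tendsto_atTop_mono (fun x => (Real.sinh_lt_cosh x).le) tendsto_sinh_top

lemma tendsto_cosh_bot : Tendsto Real.cosh atBot atTop := by
  have h := tendsto_cosh_top.comp tendsto_neg_atBot_atTop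
  have : Real.cosh ∘ Neg.neg = Real.cosh := by
    funext x; simp [Function.comp, Real.cosh_neg]
  rwa [this] at h

lemma tendsto_sech_top : Tendsto (fun t => (Real.cosh t)⁻¹) atTop (nhds 0) :=
  tendsto_cosh_top.inv_tendsto_atTop

lemma tendsto_sech_bot : Tendsto (fun t => (Real.cosh t)⁻¹) atBot (nhds 0) :=
  tendsto_cosh_bot.inv_tendsto_atTop

lemma tendsto_arctan_sinh_top :
    Tendsto (fun t => Real.arctan (Real.sinh t)) atTop (nhds (π/2)) :=
  (tendsto_nhds_of_tendsto_nhdsWithin Real.tendsto_arctan_atTop).comp tendsto_sinh_top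

lemma tendsto_arctan_sinh_bot :
    Tendsto (fun t => Real.arctan (Real.sinh t)) atBot (nhds (-(π/2))) :=
  (tendsto_nhds_of_tendsto_nhdsWithin Real.tendsto_arctan_atBot).comp tendsto_sinh_bot

lemma hasDerivAt_arctan_sinh (t : ℝ) :
    HasDerivAt (fun s => Real.arctan (Real.sinh s)) (Real.cosh t)⁻¹ t := by
  have h := (Real.hasDerivAt_arctan (Real.sinh t)).comp t (Real.hasDerivAt_sinh t)
  refine h.congr_deriv ?_
  have hc := (Real.cosh_pos t).ne'
  rw [show (1:ℝ) + Real.sinh t ^ 2 = Real.cosh t ^ 2 by rw [Real.cosh_sq]; ring]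
  field_simp

lemma hasDerivAt_neg_sech (t : ℝ) :
    HasDerivAt (fun s => -(Real.cosh s)⁻¹) ((Real.cosh t)⁻¹ * Real.tanh t) t := by
  have h := ((Real.hasDerivAt_cosh t).inv (Real.cosh_pos t).ne').neg
  refine (h.congr_deriv ?_)
  rw [Real.tanh_eq_sinh_div_cosh]
  have hc := (Real.cosh_pos t).ne'
  field_simp

lemma hasDerivAt_F2 (t : ℝ) :
    HasDerivAt (fun s => (Real.arctan (Real.sinh s) - Real.sinh s / Real.cosh s ^ 2) / 2)
      ((Real.cosh t)⁻¹ * Real.tanh t ^ 2) t := by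
  have hc := (Real.cosh_pos t).ne'
  have h2 : HasDerivAt (fun s => Real.sinh s / Real.cosh s ^ 2)
      ((Real.cosh t * Real.cosh t ^ 2 - Real.sinh t * (2 * Real.cosh t ^ 1 * Real.sinh t))
        / (Real.cosh t ^ 2) ^ 2) t :=
    (Real.hasDerivAt_sinh t).div ((Real.hasDerivAt_cosh t).pow 2) (by positivity)
  have h := ((hasDerivAt_arctan_sinh t).sub h2).div_const 2
  refine h.congr_deriv ?_
  rw [Real.tanh_eq_sinh_div_cosh]
  have hs : Real.sinh t ^ 2 = Real.cosh t ^ 2 - 1 := by rw [Real.cosh_sq]; ring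
  field_simp
  nlinarith [hs, Real.cosh_pos t, sq_nonneg (Real.cosh t), sq_nonneg (Real.sinh t)]


lemma abs_sinh_le_cosh (t : ℝ) : |Real.sinh t| ≤ Real.cosh t := by
  rcases abs_cases (Real.sinh t) with ⟨h, _⟩ | ⟨h, _⟩ <;> rw [h]
  · exact (Real.sinh_lt_cosh t).le
  · have := Real.sinh_lt_cosh (-t)
    rw [Real.sinh_neg, Real.cosh_neg] at this
    linarith

lemma abs_tanh_le_one (t : ℝ) : |Real.tanh t| ≤ 1 := by
  rw [Real.tanh_eq_sinh_div_cosh, abs_div, abs_of_pos (Real.cosh_pos t),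
    div_le_one (Real.cosh_pos t)]
  exact abs_sinh_le_cosh t

lemma integrable_sech_mul {g : ℝ → ℝ} (hg : Continuous g) (hb : ∀ t, |g t| ≤ 1) :
    Integrable (fun t : ℝ => (Real.cosh t)⁻¹ * g t) := by
  refine integrable_sech.mono
    (((Real.continuous_cosh.inv₀ fun t => (Real.cosh_pos t).ne').mul hg).aestronglyMeasurable)
    (ae_of_all _ fun t => ?_)
  have h1 : |(Real.cosh t)⁻¹| = (Real.cosh t)⁻¹ := abs_of_pos (inv_pos.2 (Real.cosh_pos t))
  rw [Real.norm_eq_abs, Real.norm_eq_abs, abs_mul, h1]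
  calc (Real.cosh t)⁻¹ * |g t| ≤ (Real.cosh t)⁻¹ * 1 :=
        mul_le_mul_of_nonneg_left (hb t) (inv_pos.2 (Real.cosh_pos t)).le
    _ = (Real.cosh t)⁻¹ := mul_one _

lemma tendsto_sinh_div_cosh_sq_top :
    Tendsto (fun t => Real.sinh t / Real.cosh t ^ 2) atTop (nhds 0) := by
  refine squeeze_zero_norm (fun t => ?_) tendsto_sech_top
  rw [Real.norm_eq_abs, abs_div, abs_of_pos (pow_pos (Real.cosh_pos t) 2)]
  rw [div_le_iff₀ (pow_pos (Real.cosh_pos t) 2)]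
  have := abs_sinh_le_cosh t
  have hc := (Real.cosh_pos t)
  calc |Real.sinh t| ≤ Real.cosh t := this
    _ = (Real.cosh t)⁻¹ * Real.cosh t ^ 2 := by field_simp
  
lemma tendsto_sinh_div_cosh_sq_bot :
    Tendsto (fun t => Real.sinh t / Real.cosh t ^ 2) atBot (nhds 0) := by
  refine squeeze_zero_norm (fun t => ?_) tendsto_sech_bot
  rw [Real.norm_eq_abs, abs_div, abs_of_pos (pow_pos (Real.cosh_pos t) 2)]
  rw [div_le_iff₀ (pow_pos (Real.cosh_pos t) 2)]
  calc |Real.sinh t| ≤ Real.cosh t := abs_sinh_le_cosh t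
    _ = (Real.cosh t)⁻¹ * Real.cosh t ^ 2 := by field_simp

lemma continuous_tanh' : Continuous Real.tanh := by
  have : Real.tanh = fun t => Real.sinh t / Real.cosh t := by
    funext t; exact Real.tanh_eq_sinh_div_cosh t
  rw [this]
  exact Real.continuous_sinh.div Real.continuous_cosh fun t => (Real.cosh_pos t).ne'

lemma integral_sech_eq : (∫ t : ℝ, (Real.cosh t)⁻¹) = π := by
  have := integral_of_hasDerivAt_of_tendsto hasDerivAt_arctan_sinh integrable_sech
    tendsto_arctan_sinh_bot tendsto_arctan_sinh_top
  rw [this]; ring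

lemma integral_sech_tanh_eq : (∫ t : ℝ, (Real.cosh t)⁻¹ * Real.tanh t) = 0 := by
  have hint : Integrable (fun t : ℝ => (Real.cosh t)⁻¹ * Real.tanh t) :=
    integrable_sech_mul continuous_tanh' abs_tanh_le_one
  have h0 : Tendsto (fun s : ℝ => -(Real.cosh s)⁻¹) atTop (nhds (-0)) := tendsto_sech_top.neg
  have h1 : Tendsto (fun s : ℝ => -(Real.cosh s)⁻¹) atBot (nhds (-0)) := tendsto_sech_bot.neg
  have := integral_of_hasDerivAt_of_tendsto hasDerivAt_neg_sech hint h1 h0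
  rw [this]; ring

lemma integral_sech_tanh_sq_eq : (∫ t : ℝ, (Real.cosh t)⁻¹ * (Real.tanh t * Real.tanh t)) = π / 2 := by
  have hint : Integrable (fun t : ℝ => (Real.cosh t)⁻¹ * (Real.tanh t * Real.tanh t)) := by
    refine integrable_sech_mul (continuous_tanh'.mul continuous_tanh') fun t => ?_
    rw [abs_mul]
    exact mul_le_one₀ (abs_tanh_le_one t) (abs_nonneg _) (abs_tanh_le_one t)
  have htop : Tendsto (fun s => (Real.arctan (Real.sinh s) - Real.sinh s / Real.cosh s ^ 2) / 2)
      atTop (nhds ((π/2 - 0)/2)) :=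
    (tendsto_arctan_sinh_top.sub tendsto_sinh_div_cosh_sq_top).div_const 2
  have hbot : Tendsto (fun s => (Real.arctan (Real.sinh s) - Real.sinh s / Real.cosh s ^ 2) / 2)
      atBot (nhds ((-(π/2) - 0)/2)) :=
    (tendsto_arctan_sinh_bot.sub tendsto_sinh_div_cosh_sq_bot).div_const 2
  have hd : ∀ t : ℝ, HasDerivAt
      (fun s => (Real.arctan (Real.sinh s) - Real.sinh s / Real.cosh s ^ 2) / 2)
      ((Real.cosh t)⁻¹ * (Real.tanh t * Real.tanh t)) t := by
    intro t
    have := hasDerivAt_F2 t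
    convert this using 1
    ring
  have := integral_of_hasDerivAt_of_tendsto hd hint hbot htop
  rw [this]; ring

noncomputable def sechBase (p q : Prop) [Decidable p] [Decidable q] (u : ℝ) : ℝ :=
  Real.pi⁻¹ * ((Real.cosh u)⁻¹ *
    ((if p then Real.tanh u else 1) * (if q then Real.tanh u else 1)))

lemma integrable_sechBase (p q : Prop) [Decidable p] [Decidable q] :
    Integrable (sechBase p q) := by
  unfold sechBase
  by_cases hp : p <;> by_cases hq : q <;>
    simp only [hp, hq, if_true, if_false, mul_one, one_mul]
  · exact (integrable_sech_mul (continuous_tanh'.mul continuous_tanh')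
      (fun t => by rw [Pi.mul_apply, abs_mul]; exact
        mul_le_one₀ (abs_tanh_le_one t) (abs_nonneg _) (abs_tanh_le_one t))).const_mul _
  · exact (integrable_sech_mul continuous_tanh' abs_tanh_le_one).const_mul _
  · exact (integrable_sech_mul continuous_tanh' abs_tanh_le_one).const_mul _
  · exact integrable_sech.const_mul _

lemma integral_sechBase (p q : Prop) [Decidable p] [Decidable q] :
    (∫ u : ℝ, sechBase p q u) = if p ∧ q then 1/2 else if p ∨ q then 0 else 1 := by
  unfold sechBase
  by_cases hp : p <;> by_cases hq : q <;>
    simp only [hp, hq, if_true, if_false, mul_one, one_mul,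
      and_self, and_true, and_false, false_and, or_self, or_true, true_or, false_or,
      true_and, iff_true, iff_false] <;> rw [integral_const_mul]
  · rw [integral_sech_tanh_sq_eq]
    field_simp
  · rw [integral_sech_tanh_eq, mul_zero]
  · rw [integral_sech_tanh_eq, mul_zero]
  · rw [integral_sech_eq, inv_mul_cancel₀ Real.pi_ne_zero]

lemma integrable_sechBase_shift (p q : Prop) [Decidable p] [Decidable q] (c : ℝ) :
    Integrable (fun t => sechBase p q (t - c)) :=
  (integrable_sechBase p q).comp_sub_right c

lemma integral_sechBase_shift (p q : Prop) [Decidable p] [Decidable q] (c : ℝ) :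
    (∫ t : ℝ, sechBase p q (t - c)) = if p ∧ q then 1/2 else if p ∨ q then 0 else 1 := by
  rw [integral_sub_right_eq_self (sechBase p q) c]
  exact integral_sechBase p q

lemma sech_shift_norm (c : ℝ) : (∫ t : ℝ, Real.pi⁻¹ * (Real.cosh (t - c))⁻¹) = 1 := by
  have := integral_sechBase_shift False False c
  simpa [sechBase] using this

/-- Partial derivative of `f : ℝᵐ → ℝ` in the `a`-th coordinate direction at `θ`. -/
noncomputable def pd {m : ℕ} (a : Fin m) (f : (Fin m → ℝ) → ℝ) (θ : Fin m → ℝ) : ℝ :=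
  deriv (fun t => f (Function.update θ a t)) (θ a)

/-- The hyperbolic-secant product family `P(x;θ) = π⁻ⁿ ∏_i sech(xⁱ − hⁱ(θ)√2)`. -/
noncomputable def sechFamily {n m : ℕ} (h : (Fin m → ℝ) → Fin n → ℝ)
    (θ : Fin m → ℝ) (x : Fin n → ℝ) : ℝ :=
  (Real.pi ^ n)⁻¹ * ∏ i, (Real.cosh (x i - h θ i * Real.sqrt 2))⁻¹

lemma hasDerivAt_comp_update {n m : ℕ} (h : (Fin m → ℝ) → Fin n → ℝ)
    (hh : ContDiff ℝ 1 h) (θ : Fin m → ℝ) (e : Fin m) (i : Fin n) :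
    HasDerivAt (fun t => h (Function.update θ e t) i)
      (pd e (fun θ' => h θ' i) θ) (θ e) := by
  have hdiff : DifferentiableAt ℝ (fun t => h (Function.update θ e t) i) (θ e) := by
    have hu : DifferentiableAt ℝ (fun t : ℝ => Function.update θ e t) (θ e) :=
      (hasDerivAt_update θ e (θ e)).differentiableAt
    have h1 : DifferentiableAt ℝ h (Function.update θ e (θ e)) :=
      (hh.differentiable one_ne_zero).differentiableAt
    have h2 : DifferentiableAt ℝ (fun v : Fin n → ℝ => v i)
        (h (Function.update θ e (θ e))) :=
      (ContinuousLinearMap.proj (R := ℝ) (φ := fun _ : Fin n => ℝ) i).differentiableAt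
    exact h2.comp (θ e) (h1.comp (θ e) hu)
  exact hdiff.hasDerivAt

lemma pd_log_sechFamily {n m : ℕ} (h : (Fin m → ℝ) → Fin n → ℝ)
    (hh : ContDiff ℝ 1 h) (θ : Fin m → ℝ) (e : Fin m) (x : Fin n → ℝ) :
    pd e (fun θ' => Real.log (sechFamily h θ' x)) θ
      = ∑ i, Real.sqrt 2 * pd e (fun θ' => h θ' i) θ
          * Real.tanh (x i - h θ i * Real.sqrt 2) := by
  have hfun : (fun t => Real.log (sechFamily h (Function.update θ e t) x))
      = fun t => Real.log ((Real.pi ^ n)⁻¹)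
          + ∑ i, -Real.log (Real.cosh (x i - h (Function.update θ e t) i * Real.sqrt 2)) := by
    funext t
    rw [sechFamily, Real.log_mul (by positivity)
        (Finset.prod_ne_zero_iff.2 fun i _ => by positivity),
      Real.log_prod fun i _ => by positivity]
    simp [Real.log_inv]
  have hterm : ∀ i : Fin n, HasDerivAt
      (fun t => -Real.log (Real.cosh (x i - h (Function.update θ e t) i * Real.sqrt 2)))
      (Real.sqrt 2 * pd e (fun θ' => h θ' i) θ
        * Real.tanh (x i - h θ i * Real.sqrt 2)) (θ e) := by
    intro i
    have hv : HasDerivAt (fun t => x i - h (Function.update θ e t) i * Real.sqrt 2)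
        (-(pd e (fun θ' => h θ' i) θ * Real.sqrt 2)) (θ e) :=
      ((hasDerivAt_comp_update h hh θ e i).mul_const _).const_sub _
    have hlog := (Real.hasDerivAt_cosh
        (x i - h (Function.update θ e (θ e)) i * Real.sqrt 2)).log
        (Real.cosh_pos _).ne'
    have hc := (hlog.comp (θ e) hv).neg
    rw [Function.update_eq_self e θ] at hc
    refine hc.congr_deriv ?_
    rw [Real.tanh_eq_sinh_div_cosh]
    ring
  have hsum : HasDerivAt
      (fun t => Real.log ((Real.pi ^ n)⁻¹)
        + ∑ i, -Real.log (Real.cosh (x i - h (Function.update θ e t) i * Real.sqrt 2)))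
      (∑ i, Real.sqrt 2 * pd e (fun θ' => h θ' i) θ
        * Real.tanh (x i - h θ i * Real.sqrt 2)) (θ e) :=
    (HasDerivAt.fun_sum fun i _ => hterm i).const_add _
  show deriv (fun t => Real.log (sechFamily h (Function.update θ e t) x)) (θ e) = _
  rw [hfun]
  exact hsum.deriv

lemma sechFamily_eq_prod {n m : ℕ} (h : (Fin m → ℝ) → Fin n → ℝ)
    (θ : Fin m → ℝ) (x : Fin n → ℝ) :
    sechFamily h θ x = ∏ k, Real.pi⁻¹ * (Real.cosh (x k - h θ k * Real.sqrt 2))⁻¹ := by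
  rw [sechFamily, Finset.prod_mul_distrib, Finset.prod_const, Finset.card_univ,
    Fintype.card_fin, inv_pow]

/-- Each factor of the hyperbolic-secant family is a normalized density, and the
Fisher information metric is `g_{ab}(θ) = Σ_i ∂_a hⁱ(θ) ∂_b hⁱ(θ)`. -/
theorem fisher_metric_sech {n m : ℕ} (h : (Fin m → ℝ) → Fin n → ℝ)
    (hh : ContDiff ℝ 1 h) (θ : Fin m → ℝ) (a b : Fin m) :
    (∀ i : Fin n,
      (∫ t : ℝ, Real.pi⁻¹ * (Real.cosh (t - h θ i * Real.sqrt 2))⁻¹) = 1) ∧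
    (∫ x : Fin n → ℝ, sechFamily h θ x *
        pd a (fun θ' => Real.log (sechFamily h θ' x)) θ *
        pd b (fun θ' => Real.log (sechFamily h θ' x)) θ)
      = ∑ i, pd a (fun θ' => h θ' i) θ * pd b (fun θ' => h θ' i) θ := by
  constructor
  · intro i; exact sech_shift_norm _
  have hprod : ∀ i j : Fin n, ∀ x : Fin n → ℝ,
      (∏ k, sechBase (i = k) (j = k) (x k - h θ k * Real.sqrt 2))
        = sechFamily h θ x * (Real.tanh (x i - h θ i * Real.sqrt 2)
            * Real.tanh (x j - h θ j * Real.sqrt 2)) := by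
    intro i j x
    unfold sechBase
    calc (∏ k, Real.pi⁻¹ * ((Real.cosh (x k - h θ k * Real.sqrt 2))⁻¹ *
            ((if i = k then Real.tanh (x k - h θ k * Real.sqrt 2) else 1) *
             (if j = k then Real.tanh (x k - h θ k * Real.sqrt 2) else 1))))
        = (∏ k, Real.pi⁻¹ * (Real.cosh (x k - h θ k * Real.sqrt 2))⁻¹) *
            ((∏ k, if i = k then Real.tanh (x k - h θ k * Real.sqrt 2) else 1) *
             (∏ k, if j = k then Real.tanh (x k - h θ k * Real.sqrt 2) else 1)) := by
          rw [← Finset.prod_mul_distrib, ← Finset.prod_mul_distrib]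
          exact Finset.prod_congr rfl fun k _ => by ring
      _ = _ := by
          rw [Finset.prod_ite_eq, Finset.prod_ite_eq, if_pos (Finset.mem_univ i),
            if_pos (Finset.mem_univ j), ← sechFamily_eq_prod]
  have hpt : ∀ x : Fin n → ℝ, sechFamily h θ x *
        pd a (fun θ' => Real.log (sechFamily h θ' x)) θ *
        pd b (fun θ' => Real.log (sechFamily h θ' x)) θ
      = ∑ i, ∑ j, (Real.sqrt 2 * pd a (fun θ' => h θ' i) θ *
            (Real.sqrt 2 * pd b (fun θ' => h θ' j) θ))
          * ∏ k, sechBase (i = k) (j = k) (x k - h θ k * Real.sqrt 2) := by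
    intro x
    rw [pd_log_sechFamily h hh θ a x, pd_log_sechFamily h hh θ b x]
    rw [mul_assoc, Finset.sum_mul_sum, Finset.mul_sum]
    refine Finset.sum_congr rfl fun i _ => ?_
    rw [Finset.mul_sum]
    refine Finset.sum_congr rfl fun j _ => ?_
    rw [hprod i j x]
    ring
  have hint : ∀ i j : Fin n, Integrable (fun x : Fin n → ℝ =>
      ∏ k, sechBase (i = k) (j = k) (x k - h θ k * Real.sqrt 2)) :=
    fun i j => Integrable.fintype_prod
      (f := fun k t => sechBase (i = k) (j = k) (t - h θ k * Real.sqrt 2))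
      fun k => integrable_sechBase_shift _ _ _
  rw [show (fun x : Fin n → ℝ => sechFamily h θ x *
        pd a (fun θ' => Real.log (sechFamily h θ' x)) θ *
        pd b (fun θ' => Real.log (sechFamily h θ' x)) θ) = _ from funext hpt]
  rw [integral_finset_sum _ (fun i _ => integrable_finset_sum _
    (fun j _ => (hint i j).const_mul _))]
  refine Finset.sum_congr rfl fun i _ => ?_
  rw [integral_finset_sum _ (fun j _ => (hint i j).const_mul _)]
  have hterm : ∀ j : Fin n, (∫ x : Fin n → ℝ,
      (Real.sqrt 2 * pd a (fun θ' => h θ' i) θ *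
        (Real.sqrt 2 * pd b (fun θ' => h θ' j) θ))
        * ∏ k, sechBase (i = k) (j = k) (x k - h θ k * Real.sqrt 2))
      = (Real.sqrt 2 * pd a (fun θ' => h θ' i) θ *
          (Real.sqrt 2 * pd b (fun θ' => h θ' j) θ))
        * ∏ k, if (i = k) ∧ (j = k) then 1/2 else if (i = k) ∨ (j = k) then 0 else 1 := by
    intro j
    rw [integral_const_mul, integral_fintype_prod_volume_eq_prod
      (fun k t => sechBase (i = k) (j = k) (t - h θ k * Real.sqrt 2))]
    congr 1
    exact Finset.prod_congr rfl fun k _ => integral_sechBase_shift _ _ _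
  rw [Finset.sum_congr rfl fun j _ => hterm j]
  rw [Finset.sum_eq_single i]
  · have hdiag : ∀ k : Fin n, (if (i = k) ∧ (i = k) then (1:ℝ)/2
        else if (i = k) ∨ (i = k) then 0 else 1) = if i = k then 1/2 else 1 := by
      intro k; by_cases hik : i = k <;> simp [hik]
    rw [Finset.prod_congr rfl fun k _ => hdiag k, Finset.prod_ite_eq,
      if_pos (Finset.mem_univ i)]
    have h2 : Real.sqrt 2 * Real.sqrt 2 = 2 := Real.mul_self_sqrt (by norm_num)
    linear_combination (pd a (fun θ' => h θ' i) θ * pd b (fun θ' => h θ' i) θ / 2) * h2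
  · intro j _ hji
    have : (∏ k, if (i = k) ∧ (j = k) then (1:ℝ)/2
        else if (i = k) ∨ (j = k) then 0 else 1) = 0 := by
      refine Finset.prod_eq_zero (Finset.mem_univ j) ?_
      rw [if_neg, if_pos (Or.inr rfl)]
      rintro ⟨hij, -⟩
      exact hji (hij.symm ▸ rfl)
    rw [this, mul_zero]
  · intro hi; exact absurd (Finset.mem_univ i) hi
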